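/- arXiv:0707.2008 — 2 statements merged into one kernel-verified Lean document; each statement's English description precedes it below -/
import Mathlib

section
/- Let H be a real Hilbert space, let C be a family of closed subspaces of H containing the zero subspace that has the Minimal Approximation Property, let F = (f_1, …, f_m) be a finite family of vectors in H, and let l ≥ 1. If (c_0, V_0) is a Γ-minimal pair, then every bundle V' ∈ W(c_0) is a solution of the minimization problem: e(F, V') ≤ e(F, V) for every bundle V with components in C. -/
open Metric Finset

/-- Total squared distance from a finite family `F` to a closed subspace `V`. -/
noncomputable def totalErr {H : Type*} [NormedAddCommGroup H] [InnerProductSpace ℝ H]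
    {m : ℕ} (F : Fin m → H) (V : Submodule ℝ H) : ℝ :=
  ∑ i, Metric.infDist (F i) (V : Set H) ^ 2

/-- The Minimal Approximation Property for a family `C` of subspaces of `H`. -/
def HasMAP {H : Type*} [NormedAddCommGroup H] [InnerProductSpace ℝ H]
    (C : Set (Submodule ℝ H)) : Prop :=
  ∀ (m : ℕ) (F : Fin m → H), ∃ V0 ∈ C, ∀ V ∈ C, totalErr F V0 ≤ totalErr F V

/-- The objective `e(F, V)`: sum over the data of the squared distance to the
closest subspace of the bundle. -/
noncomputable def eBundle {H : Type*} [NormedAddCommGroup H] [InnerProductSpace ℝ H]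
    {m l : ℕ} (F : Fin m → H) (V : Fin l → Submodule ℝ H) : ℝ :=
  ∑ i, ⨅ j, Metric.infDist (F i) (V j : Set H) ^ 2

/-- `Γ(c, V)` for a labeling `c` and a bundle `V`. -/
noncomputable def Gamma {H : Type*} [NormedAddCommGroup H] [InnerProductSpace ℝ H]
    {m l : ℕ} (F : Fin m → H) (c : Fin m → Fin l) (V : Fin l → Submodule ℝ H) : ℝ :=
  ∑ i, Metric.infDist (F i) (V (c i) : Set H) ^ 2

/-- `V ∈ W(c)`: `V` is a best bundle for the labeling `c`. -/
def IsBestBundle {H : Type*} [NormedAddCommGroup H] [InnerProductSpace ℝ H]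
    (C : Set (Submodule ℝ H)) {m l : ℕ} (F : Fin m → H)
    (c : Fin m → Fin l) (V : Fin l → Submodule ℝ H) : Prop :=
  (∀ j, V j ∈ C) ∧ ∀ j, ∀ W ∈ C,
    ∑ i ∈ Finset.univ.filter (fun i => c i = j), Metric.infDist (F i) (V j : Set H) ^ 2 ≤
      ∑ i ∈ Finset.univ.filter (fun i => c i = j), Metric.infDist (F i) (W : Set H) ^ 2

/-- A `Γ`-minimal pair. -/
def IsGammaMinimal {H : Type*} [NormedAddCommGroup H] [InnerProductSpace ℝ H]
    (C : Set (Submodule ℝ H)) {m l : ℕ} (F : Fin m → H)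
    (c0 : Fin m → Fin l) (V0 : Fin l → Submodule ℝ H) : Prop :=
  IsBestBundle C F c0 V0 ∧
    ∀ (c : Fin m → Fin l) (V : Fin l → Submodule ℝ H),
      IsBestBundle C F c V → Gamma F c0 V0 ≤ Gamma F c V

/-
Given a bundle `V`, label each datum by its nearest subspace of `V`, so that
`Γ(c, V) = e(F, V)`, and replace `V` by a best bundle `W` for that labeling, which exists by
the MAP applied to each cluster and only lowers `Γ`. Then
`e(F, V') ≤ Γ(c₀, V') ≤ Γ(c₀, V₀) ≤ Γ(c, W) ≤ Γ(c, V) = e(F, V)`.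
-/

section Bundles

variable {H : Type*} [NormedAddCommGroup H] [InnerProductSpace ℝ H] {m l : ℕ}

theorem gamma_eq_sum_fiberwise (F : Fin m → H) (c : Fin m → Fin l)
    (V : Fin l → Submodule ℝ H) :
    Gamma F c V = ∑ j, ∑ i ∈ univ.filter (fun i => c i = j), infDist (F i) (V j : Set H) ^ 2 := by
  rw [Gamma, ← sum_fiberwise_of_maps_to (g := c) fun i _ => mem_univ (c i)]
  refine sum_congr rfl fun j _ => sum_congr rfl fun i hi => ?_
  rw [(mem_filter.mp hi).2]

theorem IsBestBundle.gamma_le {C : Set (Submodule ℝ H)} {F : Fin m → H} {c : Fin m → Fin l}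
    {V : Fin l → Submodule ℝ H} (hV : IsBestBundle C F c V) {W : Fin l → Submodule ℝ H}
    (hW : ∀ j, W j ∈ C) : Gamma F c V ≤ Gamma F c W := by
  rw [gamma_eq_sum_fiberwise, gamma_eq_sum_fiberwise]
  exact sum_le_sum fun j _ => hV.2 j (W j) (hW j)

theorem eBundle_le_gamma (F : Fin m → H) (c : Fin m → Fin l) (V : Fin l → Submodule ℝ H) :
    eBundle F V ≤ Gamma F c V :=
  sum_le_sum fun i _ => ciInf_le (Set.finite_range _).bddBelow (c i)

theorem exists_gamma_eq_eBundle [Nonempty (Fin m → Fin l)] (F : Fin m → H)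
    (V : Fin l → Submodule ℝ H) : ∃ c : Fin m → Fin l, Gamma F c V = eBundle F V := by
  have nearest (i : Fin m) :
      ∃ j, infDist (F i) (V j : Set H) ^ 2 = ⨅ j, infDist (F i) (V j : Set H) ^ 2 :=
    have : Nonempty (Fin l) := ‹Nonempty (Fin m → Fin l)›.map (· i)
    exists_eq_ciInf_of_finite
  choose c hc using nearest
  exact ⟨c, sum_congr rfl fun i _ => hc i⟩

theorem totalErr_ite_zero (F : Fin m → H) (p : Fin m → Prop) [DecidablePred p]
    (V : Submodule ℝ H) :
    totalErr (fun i => if p i then F i else 0) V =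
      ∑ i ∈ univ.filter p, infDist (F i) (V : Set H) ^ 2 := by
  rw [totalErr, sum_filter]
  refine sum_congr rfl fun i _ => ?_
  split_ifs
  · rfl
  · simp [infDist_zero_of_mem V.zero_mem]

/-- Each cluster `{i | c i = j}` gets its own optimal subspace by applying the MAP to the
family in which the data outside the cluster are replaced by `0 ∈ V`. -/
theorem HasMAP.exists_isBestBundle {C : Set (Submodule ℝ H)} (hMAP : HasMAP C)
    (F : Fin m → H) (c : Fin m → Fin l) : ∃ W, IsBestBundle C F c W := by
  have cluster (j : Fin l) : ∃ Wj ∈ C, ∀ U ∈ C,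
      ∑ i ∈ univ.filter (fun i => c i = j), infDist (F i) (Wj : Set H) ^ 2 ≤
        ∑ i ∈ univ.filter (fun i => c i = j), infDist (F i) (U : Set H) ^ 2 := by
    obtain ⟨Wj, hWjC, hWj⟩ := hMAP m fun i => if c i = j then F i else 0
    refine ⟨Wj, hWjC, fun U hU => ?_⟩
    simpa only [totalErr_ite_zero] using hWj U hU
  choose W hWC hW using cluster
  exact ⟨W, hWC, hW⟩

end Bundles

theorem isBestBundle_solves_of_isGammaMinimal_general
    {H : Type*} [NormedAddCommGroup H] [InnerProductSpace ℝ H]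
    (C : Set (Submodule ℝ H)) (hMAP : HasMAP C)
    {m l : ℕ} (F : Fin m → H)
    (c0 : Fin m → Fin l) (V0 : Fin l → Submodule ℝ H)
    (hmin : IsGammaMinimal C F c0 V0)
    (V' : Fin l → Submodule ℝ H) (hV' : IsBestBundle C F c0 V') :
    ∀ V : Fin l → Submodule ℝ H, (∀ j, V j ∈ C) → eBundle F V' ≤ eBundle F V := by
  intro V hVC
  have : Nonempty (Fin m → Fin l) := ⟨c0⟩
  obtain ⟨c, hc⟩ := exists_gamma_eq_eBundle F V
  obtain ⟨W, hW⟩ := hMAP.exists_isBestBundle F c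
  calc eBundle F V' ≤ Gamma F c0 V' := eBundle_le_gamma F c0 V'
    _ ≤ Gamma F c0 V0 := hV'.gamma_le hmin.1.1
    _ ≤ Gamma F c W := hmin.2 c W hW
    _ ≤ Gamma F c V := hW.gamma_le hVC
    _ = eBundle F V := hc

/-- If `(c₀, V₀)` is a `Γ`-minimal pair, then every best bundle for `c₀` solves the
minimization problem. -/
theorem isBestBundle_solves_of_isGammaMinimal
    {H : Type*} [NormedAddCommGroup H] [InnerProductSpace ℝ H] [CompleteSpace H]
    (C : Set (Submodule ℝ H)) (hC : ∀ V ∈ C, IsClosed (V : Set H))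
    (hbot : (⊥ : Submodule ℝ H) ∈ C) (hMAP : HasMAP C)
    {m l : ℕ} (F : Fin m → H) (hl : 1 ≤ l)
    (c0 : Fin m → Fin l) (V0 : Fin l → Submodule ℝ H)
    (hmin : IsGammaMinimal C F c0 V0)
    (V' : Fin l → Submodule ℝ H) (hV' : IsBestBundle C F c0 V') :
    ∀ V : Fin l → Submodule ℝ H, (∀ j, V j ∈ C) → eBundle F V' ≤ eBundle F V :=
  isBestBundle_solves_of_isGammaMinimal_general C hMAP F c0 V0 hmin V' hV'
end

section
/- Let H be a real Hilbert space, let C be a family of closed subspaces of H containing the zero subspace that has the Minimal Approximation Property, let F = (f_1, …, f_m) be a finite family of vectors in H, and let l ≥ 1. Let CW be a function assigning to each labeling c a bundle CW(c) ∈ W(c), and let CP be a function assigning to each bundle V a labeling CP(V) ∈ Ω(V). Given any initial labeling c_1, define recursively V_j = CW(c_j) and c_{j+1} = CP(V_j). Then the algorithm terminates in finitely many steps: there exists an index j with 1 ≤ j ≤ l^m such that Γ(c_j, V_j) = e(F, V_j). -/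
open Metric Finset

/-- `c ∈ Ω(V)`: the labeling `c` is a best partition for the bundle `V`. -/
def IsBestPartition {H : Type*} [NormedAddCommGroup H] [InnerProductSpace ℝ H]
    {m l : ℕ} (F : Fin m → H) (V : Fin l → Submodule ℝ H) (c : Fin m → Fin l) : Prop :=
  ∀ (i : Fin m) (h : Fin l),
    Metric.infDist (F i) (V (c i) : Set H) ≤ Metric.infDist (F i) (V h : Set H)

/-!
Along the run, `V j = CW (c j)`, so `Γ(c_j, V_j)` is a function of the labeling `c_j` alone.
Each round cannot increase `Γ`: a best partition for `V_j` attains `e(F, V_j) ≤ Γ(c_j, V_j)`,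
and a best bundle for `c_{j+1}` does at least as well as `V_j`. So as long as
`Γ(c_j, V_j) ≠ e(F, V_j)` the potential strictly decreases, which cannot go on for `l ^ m`
consecutive rounds because there are only `l ^ m` labelings.
-/

theorem exists_mem_Icc_card_not_lt_succ {α β : Type*} [Fintype α] [Preorder β]
    (g : α → β) (x : ℕ → α) :
    ∃ j ∈ Set.Icc 1 (Fintype.card α), ¬ g (x (j + 1)) < g (x j) := by
  by_contra! hdec
  have hanti : StrictAntiOn (fun k => g (x (k + 1))) (Set.Iic (Fintype.card α)) :=
    strictAntiOn_Iic_of_succ_lt fun k hk => by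
      simpa [Order.succ_eq_add_one] using hdec (k + 1) ⟨by omega, hk⟩
  have hinj : Set.InjOn (fun k => x (k + 1)) (Finset.range (Fintype.card α + 1)) :=
    fun i hi k hk hik => hanti.injOn (by simpa [Nat.lt_succ_iff] using hi)
      (by simpa [Nat.lt_succ_iff] using hk) (congrArg g hik)
  have := Finset.card_le_card_of_injOn _ (t := univ) (fun _ _ => mem_univ _) hinj
  simp at this

section Bundles

variable {H : Type*} [NormedAddCommGroup H] [InnerProductSpace ℝ H] {m l : ℕ} {F : Fin m → H}
  {C : Set (Submodule ℝ H)} {c c' : Fin m → Fin l} {V V' : Fin l → Submodule ℝ H}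

theorem eBundle_le_Gamma (c : Fin m → Fin l) (V : Fin l → Submodule ℝ H) :
    eBundle F V ≤ Gamma F c V :=
  Finset.sum_le_sum fun i _ => ciInf_le (Finite.bddBelow_range _) (c i)

theorem IsBestPartition.Gamma_eq_eBundle (hc : IsBestPartition F V c) :
    Gamma F c V = eBundle F V :=
  Finset.sum_congr rfl fun i _ =>
    have : Nonempty (Fin l) := ⟨c i⟩
    le_antisymm (le_ciInf fun h => pow_le_pow_left₀ infDist_nonneg (hc i h) 2)
      (ciInf_le (Finite.bddBelow_range _) _)

theorem Gamma_eq_sum_fiberwise (c : Fin m → Fin l) (V : Fin l → Submodule ℝ H) :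
    Gamma F c V =
      ∑ j, ∑ i ∈ univ.filter (fun i => c i = j), infDist (F i) (V j : Set H) ^ 2 := by
  rw [Gamma, ← Finset.sum_fiberwise univ c]
  refine Finset.sum_congr rfl fun j _ => Finset.sum_congr rfl fun i hi => ?_
  rw [(Finset.mem_filter.mp hi).2]

theorem IsBestBundle.Gamma_le (hV : IsBestBundle C F c V) (hV' : ∀ j, V' j ∈ C) :
    Gamma F c V ≤ Gamma F c V' := by
  rw [Gamma_eq_sum_fiberwise, Gamma_eq_sum_fiberwise]
  exact Finset.sum_le_sum fun j _ => hV.2 j (V' j) (hV' j)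

theorem Gamma_lt_of_ne_eBundle (hV : ∀ j, V j ∈ C) (hc' : IsBestPartition F V c')
    (hV' : IsBestBundle C F c' V') (hne : Gamma F c V ≠ eBundle F V) :
    Gamma F c' V' < Gamma F c V :=
  calc Gamma F c' V' ≤ Gamma F c' V := hV'.Gamma_le hV
    _ = eBundle F V := hc'.Gamma_eq_eBundle
    _ < Gamma F c V := (eBundle_le_Gamma c V).lt_of_ne hne.symm

end Bundles

theorem algorithm_terminates_general
    {H : Type*} [NormedAddCommGroup H] [InnerProductSpace ℝ H]
    (C : Set (Submodule ℝ H))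
    {m l : ℕ} (F : Fin m → H)
    (CW : (Fin m → Fin l) → Fin l → Submodule ℝ H)
    (hCW : ∀ c, IsBestBundle C F c (CW c))
    (CP : (Fin l → Submodule ℝ H) → Fin m → Fin l)
    (hCP : ∀ V, IsBestPartition F V (CP V))
    (c : ℕ → Fin m → Fin l) (V : ℕ → Fin l → Submodule ℝ H)
    (hV : ∀ j, 1 ≤ j → V j = CW (c j))
    (hc : ∀ j, 1 ≤ j → c (j + 1) = CP (V j)) :
    ∃ j, 1 ≤ j ∧ j ≤ l ^ m ∧ Gamma F (c j) (V j) = eBundle F (V j) := by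
  obtain ⟨j, ⟨hj1, hjcard⟩, hj⟩ :=
    exists_mem_Icc_card_not_lt_succ (fun c => Gamma F c (CW c)) c
  refine ⟨j, hj1, by simpa using hjcard, ?_⟩
  by_contra hne
  have hVj := hV j hj1
  have hbest : IsBestBundle C F (c (j + 1)) (V (j + 1)) := hV (j + 1) (by omega) ▸ hCW _
  apply hj
  rw [← hVj, ← hV (j + 1) (by omega)]
  exact Gamma_lt_of_ne_eBundle (hVj ▸ (hCW (c j)).1) (hc j hj1 ▸ hCP (V j)) hbest hne

/-- The alternating search algorithm terminates in at most `l ^ m` steps. -/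
theorem algorithm_terminates
    {H : Type*} [NormedAddCommGroup H] [InnerProductSpace ℝ H] [CompleteSpace H]
    (C : Set (Submodule ℝ H)) (hC : ∀ V ∈ C, IsClosed (V : Set H))
    (hbot : (⊥ : Submodule ℝ H) ∈ C) (hMAP : HasMAP C)
    {m l : ℕ} (F : Fin m → H) (hl : 1 ≤ l)
    (CW : (Fin m → Fin l) → Fin l → Submodule ℝ H)
    (hCW : ∀ c, IsBestBundle C F c (CW c))
    (CP : (Fin l → Submodule ℝ H) → Fin m → Fin l)
    (hCP : ∀ V, IsBestPartition F V (CP V))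
    (c : ℕ → Fin m → Fin l) (V : ℕ → Fin l → Submodule ℝ H)
    (hV : ∀ j, 1 ≤ j → V j = CW (c j))
    (hc : ∀ j, 1 ≤ j → c (j + 1) = CP (V j)) :
    ∃ j, 1 ≤ j ∧ j ≤ l ^ m ∧ Gamma F (c j) (V j) = eBundle F (V j) :=
  algorithm_terminates_general C F CW hCW CP hCP c V hV hc
end
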